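/- If β is an FO²(ρ)-bisimulation between structures 𝔄 and 𝔅 and (a,b) ∈ β, then for every FO(ρ)-formula φ(x) of first-order logic using at most the two variables x and y (with equality allowed) and with free variable x, 𝔄 ⊨ φ(a) iff 𝔅 ⊨ φ(b). -/
import Mathlib


/-- A relational structure for a signature with unary predicate symbols `U`
and binary predicate symbols `B`. -/
structure Str (U B : Type) : Type 1 where
  dom : Type
  unary : U → dom → Prop
  binary : B → dom → dom → Prop

/-- `(a, a') ↦ (b, b')` is a partial isomorphism: it preserves equality,
unary predicates, and binary predicates in both directions. -/
def PartialIso {U B : Type} (A Bs : Str U B) (a a' : A.dom) (b b' : Bs.dom) : Prop :=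
  (a = a' ↔ b = b') ∧
  (∀ u, A.unary u a ↔ Bs.unary u b) ∧
  (∀ u, A.unary u a' ↔ Bs.unary u b') ∧
  (∀ r, A.binary r a a' ↔ Bs.binary r b b') ∧
  (∀ r, A.binary r a' a ↔ Bs.binary r b' b)

/-- An FO²-bisimulation between `A` and `Bs`: a global relation satisfying
the back-and-forth conditions with respect to partial isomorphisms. -/
def IsBisim {U B : Type} (A Bs : Str U B) (β : A.dom → Bs.dom → Prop) : Prop :=
  (∀ a, ∃ b, β a b) ∧ (∀ b, ∃ a, β a b) ∧
  ∀ a b, β a b →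
    (∀ a', ∃ b', β a' b' ∧ PartialIso A Bs a a' b b') ∧
    (∀ b', ∃ a', β a' b' ∧ PartialIso A Bs a a' b b')

/-- Two-variable first-order formulas (with equality) over the signature `(U, B)`;
the two variables are the elements of `Fin 2`. -/
inductive FO2 (U B : Type) : Type
  | eq : Fin 2 → Fin 2 → FO2 U B
  | un : U → Fin 2 → FO2 U B
  | bin : B → Fin 2 → Fin 2 → FO2 U B
  | fls : FO2 U B
  | imp : FO2 U B → FO2 U B → FO2 U B
  | all : Fin 2 → FO2 U B → FO2 U B

/-- Satisfaction of an FO² formula in a structure under a valuation of the two variables. -/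
def FO2.eval {U B : Type} (A : Str U B) : FO2 U B → (Fin 2 → A.dom) → Prop
  | .eq i j, v => v i = v j
  | .un u i, v => A.unary u (v i)
  | .bin r i j, v => A.binary r (v i) (v j)
  | .fls, _ => False
  | .imp φ ψ, v => φ.eval A v → ψ.eval A v
  | .all i φ, v => ∀ d, φ.eval A (Function.update v i d)

/-- Quantifier-free formulas. -/
def FO2.qf {U B : Type} : FO2 U B → Prop
  | .imp φ ψ => φ.qf ∧ ψ.qf
  | .all _ _ => False
  | _ => True

/-- The set of variables occurring in a formula. -/
def FO2.vars {U B : Type} : FO2 U B → Set (Fin 2)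
  | .eq i j => {i, j}
  | .un _ i => {i}
  | .bin _ i j => {i, j}
  | .fls => ∅
  | .imp φ ψ => φ.vars ∪ ψ.vars
  | .all i φ => insert i φ.vars

/-- The set of free variables of a formula. -/
def FO2.fv {U B : Type} : FO2 U B → Set (Fin 2)
  | .eq i j => {i, j}
  | .un _ i => {i}
  | .bin _ i j => {i, j}
  | .fls => ∅
  | .imp φ ψ => φ.fv ∪ ψ.fv
  | .all i φ => φ.fv \ {i}

/-- The unary predicate symbols occurring in a formula. -/
def FO2.usig {U B : Type} : FO2 U B → Set U
  | .un u _ => {u}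
  | .imp φ ψ => φ.usig ∪ ψ.usig
  | .all _ φ => φ.usig
  | _ => ∅

/-- The binary predicate symbols occurring in a formula. -/
def FO2.bsig {U B : Type} : FO2 U B → Set B
  | .bin r _ _ => {r}
  | .imp φ ψ => φ.bsig ∪ ψ.bsig
  | .all _ φ => φ.bsig
  | _ => ∅

lemma PartialIso.swap {U B : Type} {A Bs : Str U B} {a a' : A.dom} {b b' : Bs.dom}
    (h : PartialIso A Bs a a' b b') : PartialIso A Bs a' a b' b :=
  ⟨eq_comm.trans (h.1.trans eq_comm), h.2.2.1, h.2.1, h.2.2.2.2, h.2.2.2.1⟩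

lemma key {U B : Type} (A Bs : Str U B) (β : A.dom → Bs.dom → Prop)
    (hβ : IsBisim A Bs β) (φ : FO2 U B) :
    ∀ vA vB, (∀ i, β (vA i) (vB i)) → PartialIso A Bs (vA 0) (vA 1) (vB 0) (vB 1) →
      (φ.eval A vA ↔ φ.eval Bs vB) := by
  induction φ with
  | eq i j =>
    intro vA vB hb hiso
    fin_cases i <;> fin_cases j <;> simp only [FO2.eval]
    · exact hiso.1
    · exact eq_comm.trans (hiso.1.trans eq_comm)
  | un u i =>
    intro vA vB hb hiso
    fin_cases i
    · exact hiso.2.1 u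
    · exact hiso.2.2.1 u
  | bin r i j =>
    intro vA vB hb hiso
    have diag : ∀ k, A.binary r (vA k) (vA k) ↔ Bs.binary r (vB k) (vB k) := by
      intro k
      obtain ⟨b', hb', iso⟩ := ((hβ.2.2 _ _ (hb k)).1 (vA k))
      have hbb : vB k = b' := iso.1.mp rfl
      rw [← hbb] at iso
      exact iso.2.2.2.1 r
    fin_cases i <;> fin_cases j
    · exact diag 0
    · exact hiso.2.2.2.1 r
    · exact hiso.2.2.2.2 r
    · exact diag 1
  | fls => intro _ _ _ _; exact Iff.rfl
  | imp φ ψ ihφ ihψ =>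
    intro vA vB hb hiso
    simp only [FO2.eval]
    rw [ihφ vA vB hb hiso, ihψ vA vB hb hiso]
  | all i φ ih =>
    intro vA vB hb hiso
    simp only [FO2.eval]
    constructor
    · intro h e
      fin_cases i
      · obtain ⟨d, hd, iso⟩ := (hβ.2.2 _ _ (hb 1)).2 e
        refine (ih (Function.update vA 0 d) (Function.update vB 0 e) ?_ ?_).mp (h d)
        · intro k; fin_cases k <;> simp [Function.update, hd, hb 1]
        · simpa [Function.update] using iso.swap
      · obtain ⟨d, hd, iso⟩ := (hβ.2.2 _ _ (hb 0)).2 e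
        refine (ih (Function.update vA 1 d) (Function.update vB 1 e) ?_ ?_).mp (h d)
        · intro k; fin_cases k <;> simp [Function.update, hd, hb 0]
        · simpa [Function.update] using iso
    · intro h d
      fin_cases i
      · obtain ⟨e, he, iso⟩ := (hβ.2.2 _ _ (hb 1)).1 d
        refine (ih (Function.update vA 0 d) (Function.update vB 0 e) ?_ ?_).mpr (h e)
        · intro k; fin_cases k <;> simp [Function.update, he, hb 1]
        · simpa [Function.update] using iso.swap
      · obtain ⟨e, he, iso⟩ := (hβ.2.2 _ _ (hb 0)).1 d
        refine (ih (Function.update vA 1 d) (Function.update vB 1 e) ?_ ?_).mpr (h e)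
        · intro k; fin_cases k <;> simp [Function.update, he, hb 0]
        · simpa [Function.update] using iso

/-- Bisimulation invariance of two-variable first-order logic:
if `β` is an FO²(ρ)-bisimulation between `A` and `Bs` and `(a,b) ∈ β`, then for
every FO² formula `φ` and the valuations mapping both variables to `a` and to
`b` respectively (matched via `β`), `A ⊨ φ(a)` iff `Bs ⊨ φ(b)`. -/
theorem stmt1 {U B : Type} (A Bs : Str U B) (β : A.dom → Bs.dom → Prop)
    (hβ : IsBisim A Bs β) (a : A.dom) (b : Bs.dom) (hab : β a b)
    (φ : FO2 U B) :
    φ.eval A (fun _ => a) ↔ φ.eval Bs (fun _ => b) := by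
  refine key A Bs β hβ φ _ _ (fun _ => hab) ?_
  obtain ⟨b', hb', iso⟩ := (hβ.2.2 a b hab).1 a
  have hbb : b = b' := iso.1.mp rfl
  rw [← hbb] at iso
  exact iso
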